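/- arXiv:1610.09834 — 4 statements merged into one kernel-verified Lean document; each statement's English description precedes it below -/
import Mathlib

section
/- For every matrix M ∈ SL(2,ℤ) there exists exactly one reduced word w over the two-letter alphabet {s,r} such that φ(w) = M or φ(w) = -M; here a word over {s,r} is called reduced if it contains no occurrence of the factor ss and no occurrence of the factor rrr. -/
/-- The matrix `S = [[0,-1],[1,0]]` as an element of `SL(2,ℤ)`. -/
def Smat : Matrix.SpecialLinearGroup (Fin 2) ℤ :=
  ⟨!![0, -1; 1, 0], by norm_num [Matrix.det_fin_two_of]⟩

/-- The matrix `R = [[0,-1],[1,1]]` as an element of `SL(2,ℤ)`. -/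
def Rmat : Matrix.SpecialLinearGroup (Fin 2) ℤ :=
  ⟨!![0, -1; 1, 1], by norm_num [Matrix.det_fin_two_of]⟩

instance : Fact (Even (Fintype.card (Fin 2))) := ⟨by simp⟩

/-- The alphabet `{s, r}`: `false` stands for the letter `s`, `true` for the letter `r`. -/
abbrev SRletter := Bool

/-- The monoid homomorphism `φ : {s,r}* → SL(2,ℤ)` with `φ(s) = S`, `φ(r) = R`. -/
noncomputable def phi : FreeMonoid SRletter →* Matrix.SpecialLinearGroup (Fin 2) ℤ :=
  FreeMonoid.lift (fun c => if c then Rmat else Smat)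

/-- A word over `{s,r}` is reduced if it contains no factor `ss` and no factor `rrr`. -/
def IsReducedWord (w : FreeMonoid SRletter) : Prop :=
  ¬ ([false, false] <:+: FreeMonoid.toList w) ∧
    ¬ ([true, true, true] <:+: FreeMonoid.toList w)

/-!
Modulo `±1`, `S` has order 2 and `R` has order 3, so deleting a factor `ss` or `rrr` does not
change `±φ(w)`; as `S` and `T = -SR` generate `SL(2,ℤ)`, every class `±M` is hit by a reduced word.

Uniqueness is a ping-pong argument. Let the `s`-region consist of the non-diagonal matrices
`[[a,b],[c,d]]` with `ac ≥ 0` and `bd ≥ 0`, and the `r`-region of those with `ac ≤ 0`, `bd ≤ 0`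
and `ac + bd < 0`. Both regions are stable under negation, avoid `±1` and are disjoint;
`S` maps `{1} ∪ r-region` into the `s`-region, while `R` and `R²` map `{1} ∪ s-region` into the
`r`-region. Hence `φ(w)` lies in the region of the first letter of the reduced word `w`, so `±φ(w)`
determines that letter, which can then be cancelled.
-/

open scoped MatrixGroups
open FreeMonoid (ofList)

namespace SL2Z

theorem mem_center_iff {A : SL(2, ℤ)} : A ∈ Subgroup.center SL(2, ℤ) ↔ A = 1 ∨ A = -1 := by
  constructor
  · rw [Matrix.SpecialLinearGroup.mem_center_iff, Fintype.card_fin]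
    rintro ⟨r, hr, hA⟩
    rcases sq_eq_one_iff.mp hr with rfl | rfl
    · exact Or.inl (Subtype.ext (by simpa using hA.symm))
    · exact Or.inr (Subtype.ext (by simpa using hA.symm))
  · rintro (rfl | rfl)
    · exact one_mem _
    · exact Subgroup.mem_center_iff.mpr fun B => by rw [mul_neg_one, neg_one_mul]

theorem coe_eq_coe_iff {A B : SL(2, ℤ)} : (A : PSL(2, ℤ)) = B ↔ A = B ∨ A = -B := by
  rw [QuotientGroup.eq, mem_center_iff, inv_mul_eq_one, inv_mul_eq_iff_eq_mul, mul_neg_one,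
    eq_comm (a := B), neg_eq_iff_eq_neg]

theorem coe_neg_one : ((-1 : SL(2, ℤ)) : PSL(2, ℤ)) = 1 :=
  coe_eq_coe_iff.mpr (Or.inr rfl)

theorem sq_add_sq_row_pos (A : SL(2, ℤ)) (i : Fin 2) : 0 < A i 0 ^ 2 + A i 1 ^ 2 := by
  rcases eq_or_ne (A i 1) 0 with h | h
  · have : A i 0 ≠ 0 := fun h0 => not_isCoprime_zero_zero (h0 ▸ h ▸ A.isCoprime_row i)
    positivity
  · positivity

theorem coe_Smat_mul (M : SL(2, ℤ)) : ↑(Smat * M) = !![-M 1 0, -M 1 1; M 0 0, M 0 1] := by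
  rw [Matrix.SpecialLinearGroup.coe_mul, Matrix.eta_fin_two (M : Matrix (Fin 2) (Fin 2) ℤ)]
  simp [Smat]

theorem coe_Rmat_mul (M : SL(2, ℤ)) :
    ↑(Rmat * M) = !![-M 1 0, -M 1 1; M 0 0 + M 1 0, M 0 1 + M 1 1] := by
  rw [Matrix.SpecialLinearGroup.coe_mul, Matrix.eta_fin_two (M : Matrix (Fin 2) (Fin 2) ℤ)]
  simp [Rmat]

end SL2Z

open SL2Z

@[simp] theorem phi_ofList_nil : phi (ofList []) = 1 := map_one phi

@[simp] theorem phi_ofList_false_cons (l : List SRletter) :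
    phi (ofList (false :: l)) = Smat * phi (ofList l) := by
  simp [FreeMonoid.ofList_cons, phi]

@[simp] theorem phi_ofList_true_cons (l : List SRletter) :
    phi (ofList (true :: l)) = Rmat * phi (ofList l) := by
  simp [FreeMonoid.ofList_cons, phi]

theorem coe_phi_ofList_cons (c : SRletter) (l : List SRletter) :
    (phi (ofList (c :: l)) : PSL(2, ℤ)) = (phi (ofList [c]) : PSL(2, ℤ)) * phi (ofList l) := by
  rw [← QuotientGroup.mk_mul, ← map_mul, ← FreeMonoid.ofList_append, List.singleton_append]

theorem surjective_mk_comp_phi :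
    Function.Surjective ((QuotientGroup.mk' (Subgroup.center SL(2, ℤ))).comp phi) := by
  set π := QuotientGroup.mk' (Subgroup.center SL(2, ℤ))
  set gens := Set.range (π ∘ fun c : SRletter => if c then Rmat else Smat)
  have hfin : ∀ x ∈ gens, IsOfFinOrder x := by
    rintro _ ⟨_ | _, rfl⟩
    · exact π.isOfFinOrder (isOfFinOrder_iff_pow_eq_one.mpr ⟨4, by norm_num, by decide⟩)
    · exact π.isOfFinOrder (isOfFinOrder_iff_pow_eq_one.mpr ⟨6, by norm_num, by decide⟩)
  have hS : π Smat ∈ Subgroup.closure gens := Subgroup.subset_closure ⟨false, rfl⟩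
  have hR : π Rmat ∈ Subgroup.closure gens := Subgroup.subset_closure ⟨true, rfl⟩
  have hT : π ModularGroup.T = π Smat * π Rmat := by
    rw [← map_mul, show Smat * Rmat = -ModularGroup.T by decide]
    exact (coe_eq_coe_iff.mpr (Or.inr rfl)).symm
  have hclosure : Subgroup.closure gens = ⊤ := by
    rw [eq_top_iff, ← Subgroup.map_top_of_surjective π (QuotientGroup.mk'_surjective _),
      ← SpecialLinearGroup.SL2Z_generators, MonoidHom.map_closure, Subgroup.closure_le,
      Set.image_pair, Set.pair_subset_iff, hT]
    exact ⟨hS, mul_mem hS hR⟩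
  rw [← MonoidHom.mrange_eq_top, phi, FreeMonoid.comp_lift, FreeMonoid.mrange_lift,
    ← Subgroup.closure_toSubmonoid_of_isOfFinOrder hfin, hclosure, Subgroup.top_toSubmonoid]

theorem IsReducedWord.of_cons {c : SRletter} {l : List SRletter}
    (h : IsReducedWord (ofList (c :: l))) : IsReducedWord (ofList l) :=
  ⟨fun h' => h.1 (h'.trans (List.suffix_cons c l).isInfix),
    fun h' => h.2 (h'.trans (List.suffix_cons c l).isInfix)⟩

theorem not_isReducedWord_ss (l : List SRletter) :
    ¬IsReducedWord (ofList (false :: false :: l)) :=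
  fun h => h.1 ⟨[], l, rfl⟩

theorem not_isReducedWord_rrr (l : List SRletter) :
    ¬IsReducedWord (ofList (true :: true :: true :: l)) :=
  fun h => h.2 ⟨[], l, rfl⟩

theorem exists_isReducedWord_coe_phi_eq (l : List SRletter) :
    ∃ l', IsReducedWord (ofList l') ∧ (phi (ofList l') : PSL(2, ℤ)) = phi (ofList l) := by
  induction hn : l.length using Nat.strong_induction_on generalizing l with
  | _ n ih =>
  by_cases hl : IsReducedWord (ofList l)
  · exact ⟨l, hl, rfl⟩
  obtain ⟨x, f, y, rfl, hf, hlen⟩ :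
      ∃ x f y, l = x ++ f ++ y ∧ phi (ofList f) = -1 ∧ 0 < f.length := by
    rw [IsReducedWord, not_and_or, not_not, not_not] at hl
    rcases hl with ⟨x, y, h⟩ | ⟨x, y, h⟩
    · refine ⟨x, _, y, h.symm, ?_, by simp⟩
      simp only [phi_ofList_false_cons, phi_ofList_nil, mul_one]
      decide
    · refine ⟨x, _, y, h.symm, ?_, by simp⟩
      simp only [phi_ofList_true_cons, phi_ofList_nil, mul_one]
      decide
  obtain ⟨l', hl', h⟩ := ih (x ++ y).length (by simp only [List.length_append] at hn ⊢; omega)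
    (x ++ y) rfl
  refine ⟨l', hl', h.trans ?_⟩
  simp only [FreeMonoid.ofList_append, map_mul, hf, QuotientGroup.mk_mul, coe_neg_one, mul_one]

def region : SRletter → Set SL(2, ℤ)
  | false => {M | 0 ≤ M 0 0 * M 1 0 ∧ 0 ≤ M 0 1 * M 1 1 ∧ (M 0 1 ≠ 0 ∨ M 1 0 ≠ 0)}
  | true => {M | M 0 0 * M 1 0 ≤ 0 ∧ M 0 1 * M 1 1 ≤ 0 ∧ M 0 0 * M 1 0 + M 0 1 * M 1 1 < 0}

theorem neg_mem_region {c : SRletter} {M : SL(2, ℤ)} (hM : M ∈ region c) : -M ∈ region c := by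
  cases c <;> simpa [region] using hM

theorem one_notMem_region (c : SRletter) : 1 ∉ region c := by
  cases c <;> simp [region]

theorem disjoint_region_false_true : Disjoint (region false) (region true) :=
  Set.disjoint_left.mpr fun _ hs hr => by simp only [region, Set.mem_ofPred_eq] at hs hr; omega

theorem mapsTo_Smat_mul : Set.MapsTo (Smat * ·) (insert 1 (region true)) (region false) := by
  rintro M (rfl | ⟨hac, hbd, hsum⟩)
  · simp only [region, mul_one]
    decide
  · simp only [region, Set.mem_ofPred_eq, coe_Smat_mul, Matrix.of_apply, Matrix.cons_val',
      Matrix.cons_val_zero, Matrix.cons_val_one, Matrix.cons_val_fin_one, neg_mul,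
      Left.nonneg_neg_iff, ne_eq, neg_eq_zero]
    rw [mul_comm (M 1 0), mul_comm (M 1 1)]
    refine ⟨hac, hbd, ?_⟩
    by_contra! h
    simp [h.1, h.2] at hsum

theorem mapsTo_Rmat_mul : Set.MapsTo (Rmat * ·) (insert 1 (region false)) (region true) := by
  rintro M (rfl | ⟨hac, hbd, -⟩)
  · simp only [region, mul_one]
    decide
  · simp only [region, Set.mem_ofPred_eq, coe_Rmat_mul, Matrix.of_apply, Matrix.cons_val',
      Matrix.cons_val_zero, Matrix.cons_val_one, Matrix.cons_val_fin_one]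
    refine ⟨?_, ?_, ?_⟩ <;> nlinarith [sq_add_sq_row_pos M 1]

theorem mapsTo_Rmat_mul_Rmat_mul :
    Set.MapsTo (fun M => Rmat * (Rmat * M)) (insert 1 (region false)) (region true) := by
  rintro M (rfl | ⟨hac, hbd, -⟩)
  · simp only [region, mul_one]
    decide
  · simp only [region, Set.mem_ofPred_eq, coe_Rmat_mul, Matrix.of_apply, Matrix.cons_val',
      Matrix.cons_val_zero, Matrix.cons_val_one, Matrix.cons_val_fin_one]
    refine ⟨?_, ?_, ?_⟩ <;> nlinarith [sq_add_sq_row_pos M 0]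

theorem phi_mem_region : ∀ {c : SRletter} {l : List SRletter},
    IsReducedWord (ofList (c :: l)) → phi (ofList (c :: l)) ∈ region c
  | false, [], _ => by
    rw [phi_ofList_false_cons, phi_ofList_nil]
    exact mapsTo_Smat_mul (Set.mem_insert _ _)
  | false, false :: l, h => absurd h (not_isReducedWord_ss l)
  | false, true :: _, h => by
    rw [phi_ofList_false_cons]
    exact mapsTo_Smat_mul (Or.inr (phi_mem_region h.of_cons))
  | true, [], _ => by
    rw [phi_ofList_true_cons, phi_ofList_nil]
    exact mapsTo_Rmat_mul (Set.mem_insert _ _)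
  | true, false :: _, h => by
    rw [phi_ofList_true_cons]
    exact mapsTo_Rmat_mul (Or.inr (phi_mem_region h.of_cons))
  | true, [true], _ => by
    rw [phi_ofList_true_cons, phi_ofList_true_cons, phi_ofList_nil]
    exact mapsTo_Rmat_mul_Rmat_mul (Set.mem_insert _ _)
  | true, true :: false :: _, h => by
    rw [phi_ofList_true_cons, phi_ofList_true_cons]
    exact mapsTo_Rmat_mul_Rmat_mul (Or.inr (phi_mem_region h.of_cons.of_cons))
  | true, true :: true :: l, h => absurd h (not_isReducedWord_rrr l)

theorem coe_ne_one_of_mem_region {c : SRletter} {M : SL(2, ℤ)} (hM : M ∈ region c) :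
    (M : PSL(2, ℤ)) ≠ 1 := by
  rw [← QuotientGroup.mk_one, Ne, coe_eq_coe_iff]
  rintro (rfl | h)
  · exact one_notMem_region c hM
  · exact one_notMem_region c (by simpa [h] using neg_mem_region hM)

theorem coe_ne_coe_of_mem_region {M N : SL(2, ℤ)} (hM : M ∈ region false)
    (hN : N ∈ region true) : (M : PSL(2, ℤ)) ≠ N := by
  rw [Ne, coe_eq_coe_iff]
  rintro (rfl | rfl)
  · exact disjoint_region_false_true.notMem_of_mem_left hM hN
  · exact disjoint_region_false_true.notMem_of_mem_left hM (by simpa using neg_mem_region hN)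

theorem eq_of_coe_phi_eq : ∀ {l l' : List SRletter},
    IsReducedWord (ofList l) → IsReducedWord (ofList l') →
      (phi (ofList l) : PSL(2, ℤ)) = phi (ofList l') → l = l'
  | [], [], _, _, _ => rfl
  | [], _ :: _, _, hw', h => by
    rw [phi_ofList_nil, QuotientGroup.mk_one] at h
    exact absurd h.symm (coe_ne_one_of_mem_region (phi_mem_region hw'))
  | _ :: _, [], hw, _, h => by
    rw [phi_ofList_nil, QuotientGroup.mk_one] at h
    exact absurd h (coe_ne_one_of_mem_region (phi_mem_region hw))
  | c :: l, c' :: l', hw, hw', h => by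
    obtain rfl : c = c' := by
      cases c <;> cases c'
      · rfl
      · exact absurd h (coe_ne_coe_of_mem_region (phi_mem_region hw) (phi_mem_region hw'))
      · exact absurd h.symm (coe_ne_coe_of_mem_region (phi_mem_region hw') (phi_mem_region hw))
      · rfl
    rw [coe_phi_ofList_cons c l, coe_phi_ofList_cons c l'] at h
    rw [eq_of_coe_phi_eq hw.of_cons hw'.of_cons (mul_left_cancel h)]

/-- For every matrix `M ∈ SL(2,ℤ)` there is exactly one reduced word `w` over `{s,r}`
with `φ(w) = M` or `φ(w) = -M`. -/
theorem unique_reduced_word (M : Matrix.SpecialLinearGroup (Fin 2) ℤ) :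
    ∃! w : FreeMonoid SRletter, IsReducedWord w ∧ (phi w = M ∨ phi w = -M) := by
  simp_rw [← coe_eq_coe_iff]
  obtain ⟨w₀, hw₀⟩ := surjective_mk_comp_phi M
  obtain ⟨l, hl, hlw₀⟩ := exists_isReducedWord_coe_phi_eq (FreeMonoid.toList w₀)
  refine ⟨ofList l, ⟨hl, hlw₀.trans hw₀⟩, ?_⟩
  rintro w ⟨hw, hwM⟩
  obtain ⟨l', rfl⟩ := FreeMonoid.ofList.surjective w
  rw [eq_of_coe_phi_eq hw hl (hwM.trans (hlw₀.trans hw₀).symm)]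
end

section
/- The group homomorphism f from the free group on two generators a and b to SL(2,ℤ) determined by f(a) = [[1,2],[0,1]] and f(b) = [[1,0],[2,1]] is injective (a monomorphism); in other words, the matrices [[1,2],[0,1]] and [[1,0],[2,1]] freely generate a free subgroup of rank 2 of SL(2,ℤ). -/
/-
Sanov's ping-pong argument, for any ordered commutative ring `R` and `k ≥ 2`. On the slope
`t = x / y` of a nonzero vector `(x, y) ∈ R²`, `[[1, k], [0, 1]]` acts by `t ↦ t + k` and
`[[1, 0], [k, 1]]` by `1 / t ↦ 1 / t + k`. So every nonzero power of the first matrix sends slopes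
with `|t| < 1` to slopes with `|t| > 1`, every nonzero power of the second does the opposite, and
the ping-pong lemma shows that no nontrivial reduced word acts trivially.
-/

/-- The matrix `[[1,2],[0,1]]` as an element of `SL(2,ℤ)`. -/
def Amat : Matrix.SpecialLinearGroup (Fin 2) ℤ :=
  ⟨!![1, 2; 0, 1], by norm_num [Matrix.det_fin_two_of]⟩

/-- The matrix `[[1,0],[2,1]]` as an element of `SL(2,ℤ)`. -/
def Bmat : Matrix.SpecialLinearGroup (Fin 2) ℤ :=
  ⟨!![1, 0; 2, 1], by norm_num [Matrix.det_fin_two_of]⟩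

/-- The homomorphism from the free group on two generators `a = of false`, `b = of true`
to `SL(2,ℤ)` determined by `f(a) = [[1,2],[0,1]]` and `f(b) = [[1,0],[2,1]]`. -/
noncomputable def fHom : FreeGroup Bool →* Matrix.SpecialLinearGroup (Fin 2) ℤ :=
  FreeGroup.lift (fun c => if c then Bmat else Amat)

open Matrix MatrixGroups
open scoped Pointwise

lemma Matrix.SpecialLinearGroup.transvection_smul {ι F : Type*} [DecidableEq ι] [Fintype ι]
    [CommRing F] {i j : ι} (hij : i ≠ j) (b : F) (v : ι → F) :
    transvection hij b • v = v + Pi.single i (b * v j) := by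
  simp [Matrix.SpecialLinearGroup.smul_def, transvection_coe, add_mulVec, single_mulVec_eq,
    ← Pi.single_smul']

def SubMulAction.nonzero (G M : Type*) [Group G] [AddMonoid M] [DistribMulAction G M] :
    SubMulAction G M where
  carrier := {x | x ≠ 0}
  smul_mem' g _ hx := (smul_ne_zero_iff_ne g).2 hx

@[simp]
lemma SubMulAction.mem_nonzero {G M : Type*} [Group G] [AddMonoid M] [DistribMulAction G M]
    {x : M} : x ∈ nonzero G M ↔ x ≠ 0 :=
  Iff.rfl

namespace Sanov

section

variable {R : Type*} [CommRing R]

abbrev upper (k : R) : SL(2, R) := SpecialLinearGroup.transvection (zero_ne_one' (Fin 2)) k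

abbrev lower (k : R) : SL(2, R) := SpecialLinearGroup.transvection (one_ne_zero' (Fin 2)) k

lemma upper_smul (k : R) (v : Fin 2 → R) : upper k • v = ![v 0 + k * v 1, v 1] := by
  rw [SpecialLinearGroup.transvection_smul]
  ext i; fin_cases i <;> simp

lemma lower_smul (k : R) (v : Fin 2 → R) : lower k • v = ![v 0, v 1 + k * v 0] := by
  rw [SpecialLinearGroup.transvection_smul]
  ext i; fin_cases i <;> simp

variable (R) in
abbrev NonzeroVec := SubMulAction.nonzero SL(2, R) (Fin 2 → R)

variable [LinearOrder R] [IsStrictOrderedRing R]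

/- In terms of the slope `t = x / y` of `v = (x, y)` these are `[1, ∞]`, `(-∞, -1)`, `(0, 1)` and
`[-1, 0]`, the inequalities on `t` being multiplied by `y ^ 2` so that `t = ∞` needs no separate
case. The endpoints `±1` are split asymmetrically to keep the four sets disjoint. -/
def upperPos : Set (NonzeroVec R) := {v | v.1 1 ^ 2 ≤ v.1 0 * v.1 1}
def upperNeg : Set (NonzeroVec R) := {v | v.1 0 * v.1 1 + v.1 1 ^ 2 < 0}
def lowerPos : Set (NonzeroVec R) := {v | v.1 0 ^ 2 < v.1 0 * v.1 1}
def lowerNeg : Set (NonzeroVec R) := {v | v.1 0 * v.1 1 + v.1 0 ^ 2 ≤ 0}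

lemma upperPos_nonempty : (upperPos : Set (NonzeroVec R)).Nonempty :=
  ⟨⟨![1, 0], by simp⟩, by simp [upperPos]⟩

lemma lowerPos_nonempty : (lowerPos : Set (NonzeroVec R)).Nonempty :=
  ⟨⟨![1, 2], by simp⟩, by simp [lowerPos]⟩

lemma disjoint_upperPos_upperNeg : Disjoint (upperPos : Set (NonzeroVec R)) upperNeg :=
  Set.disjoint_left.2 fun v (h : _ ≤ _) (h' : _ < 0) => by nlinarith [sq_nonneg (v.1 1)]

lemma disjoint_lowerPos_lowerNeg : Disjoint (lowerPos : Set (NonzeroVec R)) lowerNeg :=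
  Set.disjoint_left.2 fun v (h : _ < _) (h' : _ ≤ 0) => by nlinarith [sq_nonneg (v.1 0)]

lemma disjoint_lowerPos_upperPos : Disjoint (lowerPos : Set (NonzeroVec R)) upperPos :=
  Set.disjoint_left.2 fun v (h : _ < _) (h' : _ ≤ _) => by nlinarith [sq_nonneg (v.1 0 - v.1 1)]

lemma disjoint_lowerNeg_upperNeg : Disjoint (lowerNeg : Set (NonzeroVec R)) upperNeg :=
  Set.disjoint_left.2 fun v (h : _ ≤ 0) (h' : _ < 0) => by nlinarith [sq_nonneg (v.1 0 + v.1 1)]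

lemma disjoint_lowerPos_upperNeg : Disjoint (lowerPos : Set (NonzeroVec R)) upperNeg :=
  Set.disjoint_left.2 fun v (h : _ < _) (h' : _ < 0) => by
    nlinarith [sq_nonneg (v.1 0), sq_nonneg (v.1 1)]

lemma disjoint_upperPos_lowerNeg : Disjoint (upperPos : Set (NonzeroVec R)) lowerNeg := by
  refine Set.disjoint_left.2 fun v (h : _ ≤ _) (h' : _ ≤ 0) => v.2 ?_
  have hx : v.1 0 = 0 := by nlinarith [sq_nonneg (v.1 0), sq_nonneg (v.1 1)]
  have hy : v.1 1 = 0 := by nlinarith [sq_nonneg (v.1 0), sq_nonneg (v.1 1)]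
  ext i; fin_cases i <;> simp [hx, hy]

lemma upper_smul_compl_upperNeg {k : R} (hk : 2 ≤ k) :
    upper k • (upperNeg : Set (NonzeroVec R))ᶜ ⊆ upperPos := by
  refine Set.smul_set_subset_iff.2 fun v (hv : ¬ _ < 0) => ?_
  show _ ≤ _
  simp only [SubMulAction.val_smul, upper_smul, cons_val_zero, cons_val_one]
  nlinarith [sq_nonneg (v.1 1)]

lemma upper_inv_smul_compl_upperPos {k : R} (hk : 2 ≤ k) :
    (upper k)⁻¹ • (upperPos : Set (NonzeroVec R))ᶜ ⊆ upperNeg := by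
  rw [SpecialLinearGroup.transvection_inv]
  refine Set.smul_set_subset_iff.2 fun v (hv : ¬ _ ≤ _) => ?_
  show _ < 0
  simp only [SubMulAction.val_smul, upper_smul, cons_val_zero, cons_val_one]
  nlinarith [sq_nonneg (v.1 1)]

lemma lower_smul_compl_lowerNeg {k : R} (hk : 2 ≤ k) :
    lower k • (lowerNeg : Set (NonzeroVec R))ᶜ ⊆ lowerPos := by
  refine Set.smul_set_subset_iff.2 fun v (hv : ¬ _ ≤ 0) => ?_
  show _ < _
  simp only [SubMulAction.val_smul, lower_smul, cons_val_zero, cons_val_one]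
  nlinarith [sq_nonneg (v.1 0)]

lemma lower_inv_smul_compl_lowerPos {k : R} (hk : 2 ≤ k) :
    (lower k)⁻¹ • (lowerPos : Set (NonzeroVec R))ᶜ ⊆ lowerNeg := by
  rw [SpecialLinearGroup.transvection_inv]
  refine Set.smul_set_subset_iff.2 fun v (hv : ¬ _ < _) => ?_
  show _ ≤ 0
  simp only [SubMulAction.val_smul, lower_smul, cons_val_zero, cons_val_one]
  nlinarith [sq_nonneg (v.1 0)]

end

-- `R : Type` because the ping-pong lemma puts the group in the universe of the index type `Bool`.
theorem injective_lift_upper_lower {R : Type} [CommRing R] [LinearOrder R] [IsStrictOrderedRing R]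
    {k : R} (hk : 2 ≤ k) :
    Function.Injective (FreeGroup.lift fun c : Bool => if c then lower k else upper k) := by
  refine FreeGroup.injective_lift_of_ping_pong (G := SL(2, R)) (α := NonzeroVec R) _
    (fun c => cond c lowerPos upperPos) (fun c => cond c lowerNeg upperNeg) ?_ ?_ ?_ ?_ ?_ ?_
  · exact Bool.forall_bool.2 ⟨upperPos_nonempty, lowerPos_nonempty⟩
  · exact pairwise_on_bool.2 disjoint_lowerPos_upperPos
  · exact pairwise_on_bool.2 disjoint_lowerNeg_upperNeg
  · exact Bool.forall_bool.2
      ⟨Bool.forall_bool.2 ⟨disjoint_upperPos_upperNeg, disjoint_upperPos_lowerNeg⟩,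
        Bool.forall_bool.2 ⟨disjoint_lowerPos_upperNeg, disjoint_lowerPos_lowerNeg⟩⟩
  · exact Bool.forall_bool.2 ⟨upper_smul_compl_upperNeg hk, lower_smul_compl_lowerNeg hk⟩
  · exact Bool.forall_bool.2 ⟨upper_inv_smul_compl_upperPos hk, lower_inv_smul_compl_lowerPos hk⟩

end Sanov

open Sanov

lemma Amat_eq_upper : Amat = upper 2 := by
  ext i j; fin_cases i <;> fin_cases j <;> simp [Amat, SpecialLinearGroup.transvection_coe]

lemma Bmat_eq_lower : Bmat = lower 2 := by
  ext i j; fin_cases i <;> fin_cases j <;> simp [Bmat, SpecialLinearGroup.transvection_coe]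

/-- The homomorphism `f` is injective: the matrices `[[1,2],[0,1]]` and `[[1,0],[2,1]]`
freely generate a free subgroup of rank 2 of `SL(2,ℤ)`. -/
theorem fHom_injective : Function.Injective fHom := by
  rw [fHom, Amat_eq_upper, Bmat_eq_lower]
  exact injective_lift_upper_lower le_rfl
end

section
/- For every l ≥ 1, the matrices M_i = [[1+4i, -8i²],[2, 1-4i]] for 1 ≤ i ≤ l freely generate a free subgroup of SL(2,ℤ) of rank l; that is, the group homomorphism from the free group on l generators z₁, …, z_l to SL(2,ℤ) determined by z_i ↦ M_i is injective. -/
/-- The matrix `M_i = [[1+4i, -8i²],[2, 1-4i]]` as an element of `SL(2,ℤ)`. -/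
def Mmat (i : ℕ) : Matrix.SpecialLinearGroup (Fin 2) ℤ :=
  ⟨!![1 + 4 * (i : ℤ), -8 * (i : ℤ) ^ 2; 2, 1 - 4 * (i : ℤ)], by
    simp [Matrix.det_fin_two_of]; ring⟩

/-!
With `A = [[1,2],[0,1]]` and `B = [[1,0],[2,1]]` we have `M_i = A^i B A^{-i}`. On `ℤ²` let
`Y = {|x| < |y|}` and `Z = {|y| < |x|}`: every nonzero power of `A` maps `Y` into `Z` and every
nonzero power of `B` maps `Z` into `Y`. Hence the translates `A^i Y` are pairwise disjoint, and
every nonzero power of `M_i` maps `A^j Y` (for `j ≠ i`) into `A^i Y`, so the ping-pong lemma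
for free products applies.
-/

open Cardinal Function Pointwise

theorem FreeGroup.injective_lift_of_zpow_ping_pong {ι G α : Type*} [Nontrivial ι] [Group G]
    [MulAction G α] (a : ι → G) (X : ι → Set α) (hX : ∀ i, (X i).Nonempty)
    (hdisj : Pairwise (Disjoint on X))
    (hpp : Pairwise fun i j => ∀ k : ℤ, k ≠ 0 → a i ^ k • X j ⊆ X i) :
    Injective (FreeGroup.lift a) := by
  have hlift : FreeGroup.lift a =
      (Monoid.CoprodI.lift fun i => FreeGroup.lift fun _ : Unit => a i).comp
        (freeGroupEquivCoprodI (ι := ι)).toMonoidHom := by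
    ext i; simp
  rw [hlift, MonoidHom.coe_comp]
  refine (Monoid.CoprodI.lift_injective_of_ping_pong _ ?_ X hX hdisj ?_).comp
    (MulEquiv.injective _)
  · exact Or.inr ⟨Classical.arbitrary ι, ofNat_le_aleph0.trans (aleph0_le_mk _)⟩
  · intro i j hij h hh
    obtain ⟨k, rfl⟩ : ∃ k : ℤ, FreeGroup.of () ^ k = h :=
      ⟨_, FreeGroup.freeGroupUnitEquivInt.left_inv h⟩
    have hk : k ≠ 0 := by rintro rfl; exact hh (zpow_zero _)
    simpa using hpp hij k hk

theorem FreeGroup.injective_lift_conj_zpow_of_ping_pong {ι G α : Type*} [Group G]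
    [MulAction G α] {e : ι → ℤ} (he : Injective e) {a b : G} {Y Z : Set α}
    (hY : Y.Nonempty) (hYZ : Disjoint Y Z)
    (ha : ∀ m : ℤ, m ≠ 0 → a ^ m • Y ⊆ Z) (hb : ∀ k : ℤ, k ≠ 0 → b ^ k • Z ⊆ Y) :
    Injective (FreeGroup.lift fun i => a ^ e i * b * (a ^ e i)⁻¹) := by
  have hmap : FreeGroup.lift (fun i => a ^ e i * b * (a ^ e i)⁻¹) =
      (FreeGroup.lift fun n : ℤ => a ^ n * b * (a ^ n)⁻¹).comp (FreeGroup.map e) := by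
    ext i; simp
  rw [hmap, MonoidHom.coe_comp]
  refine Injective.comp ?_ (FreeGroup.map_injective he)
  apply FreeGroup.injective_lift_of_zpow_ping_pong _ (fun n : ℤ => a ^ n • Y)
  · exact fun n => hY.smul_set
  · intro i j hij
    have hji : j - i ≠ 0 := sub_ne_zero.2 hij.symm
    rw [onFun, ← add_sub_cancel i j, zpow_add, mul_smul, Set.disjoint_smul_set]
    exact hYZ.mono_right (ha _ hji)
  · intro i j hij k hk
    have hji : j - i ≠ 0 := sub_ne_zero.2 hij.symm
    calc (a ^ i * b * (a ^ i)⁻¹) ^ k • a ^ j • Y = (a ^ i * b ^ k) • a ^ (j - i) • Y := by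
          rw [conj_zpow, smul_smul, smul_smul, zpow_sub]; group
      _ ⊆ (a ^ i * b ^ k) • Z := Set.smul_set_mono (ha _ hji)
      _ = a ^ i • b ^ k • Z := mul_smul _ _ _
      _ ⊆ a ^ i • Y := Set.smul_set_mono (hb k hk)

namespace Matrix.SpecialLinearGroup

variable {ι : Type*} [DecidableEq ι] [Fintype ι] {i j : ι}

section CommRing

variable {R : Type*} [CommRing R]

lemma transvection_zpow (hij : i ≠ j) (c : R) (k : ℤ) :
    transvection hij c ^ k = transvection hij (k • c) := by
  induction k using Int.induction_on with
  | zero => simp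
  | succ n ih => rw [_root_.zpow_add_one, ih, ← transvection_add, add_smul, one_smul]
  | pred n ih =>
    rw [_root_.zpow_sub_one, ih, transvection_inv, ← transvection_add, sub_smul, one_smul,
      sub_eq_add_neg]

lemma transvection_smul_s5 (hij : i ≠ j) (c : R) (v : ι → R) :
    transvection hij c • v = v + Pi.single i (c * v j) := by
  ext k
  simp [SpecialLinearGroup.smul_def, transvection_coe, add_mulVec, single_mulVec_eq,
    Pi.single_apply]

end CommRing

lemma abs_lt_abs_transvection_smul {R : Type*} [CommRing R] [LinearOrder R]
    [IsStrictOrderedRing R] (hij : i ≠ j) {c : R} (hc : 2 ≤ |c|) {v : ι → R}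
    (hv : |v i| < |v j|) : |(transvection hij c • v) j| < |(transvection hij c • v) i| := by
  simp only [transvection_smul_s5, Pi.add_apply, Pi.single_eq_same, Pi.single_eq_of_ne' hij,
    add_zero]
  have h := abs_sub_abs_le_abs_sub (c * v j) (-v i)
  rw [abs_neg, abs_mul, sub_neg_eq_add, add_comm] at h
  nlinarith [abs_nonneg (v j)]

lemma transvection_two_zpow_smul_subset (hij : i ≠ j) {k : ℤ} (hk : k ≠ 0) :
    transvection hij (2 : ℤ) ^ k • {v : ι → ℤ | |v i| < |v j|} ⊆ {v | |v j| < |v i|} := by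
  rintro _ ⟨v, hv : |v i| < |v j|, rfl⟩
  rw [transvection_zpow]
  refine abs_lt_abs_transvection_smul hij ?_ hv
  rw [smul_eq_mul, abs_mul, abs_two]
  linarith [Int.one_le_abs hk]

end Matrix.SpecialLinearGroup

open Matrix.SpecialLinearGroup

/-- `f(a) = [[1,2],[0,1]]`. -/
def fa : Matrix.SpecialLinearGroup (Fin 2) ℤ := transvection (zero_ne_one : (0 : Fin 2) ≠ 1) 2

/-- `f(b) = [[1,0],[2,1]]`. -/
def fb : Matrix.SpecialLinearGroup (Fin 2) ℤ := transvection (one_ne_zero : (1 : Fin 2) ≠ 0) 2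

lemma Mmat_eq_conj (n : ℕ) : Mmat n = fa ^ (n : ℤ) * fb * (fa ^ (n : ℤ))⁻¹ := by
  ext i j
  rw [fa, fb, transvection_zpow, transvection_inv]
  fin_cases i <;> fin_cases j <;>
    simp [Mmat, transvection_coe, Matrix.mul_apply, Fin.sum_univ_two, Matrix.one_apply] <;> ring

theorem Mmat_free_general (l : ℕ) :
    Function.Injective (FreeGroup.lift (fun i : Fin l => Mmat ((i : ℕ) + 1))) := by
  simp_rw [Mmat_eq_conj]
  refine FreeGroup.injective_lift_conj_zpow_of_ping_pong (fun i i' h => Fin.ext (by omega))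
    (Y := {v : Fin 2 → ℤ | |v 0| < |v 1|}) ⟨![0, 1], by simp⟩ ?_
    (fun m hm => transvection_two_zpow_smul_subset _ hm)
    (fun k hk => transvection_two_zpow_smul_subset _ hk)
  exact Set.disjoint_left.2 fun v (hv : |v 0| < |v 1|) hv' => lt_asymm hv hv'

/-- For every `l ≥ 1`, the matrices `M₁, …, M_l` freely generate a free subgroup of
`SL(2,ℤ)` of rank `l`: the homomorphism from the free group on `l` generators
`z₁, …, z_l` determined by `z_i ↦ M_i` is injective. (Here the generator `z_{i+1}`
corresponds to `(i : Fin l)`.) -/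
theorem Mmat_free (l : ℕ) (hl : 1 ≤ l) :
    Function.Injective (FreeGroup.lift (fun i : Fin l => Mmat ((i : ℕ) + 1))) :=
  Mmat_free_general l
end

section
/- Let k ≥ 1 and let s₁, …, s_k be positive integers. In the free group F with free generators g₀, g₁, …, g_k, a, consider the family of 2k elements u_i = g_{i-1} · a^{s_i} · g_i^{-1} and v_i = g_{i-1} · g_i^{-1} for 1 ≤ i ≤ k. Then this family fails to be a code (i.e., there exist two distinct nonempty finite index sequences whose corresponding products in F are equal) if and only if there exist two disjoint nonempty subsets U₁, U₂ ⊆ {1,…,k} with ∑_{i∈U₁} s_i = ∑_{i∈U₂} s_i (i.e., the equal subset sum instance s₁,…,s_k has a solution). -/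
/-!
Between consecutive factors the only possible cancellation is `g_i⁻¹ · g_i`, which happens exactly
when the index goes up by one. Hence a product splits along the maximal runs `i, i+1, …, j` of
consecutive indices, each run contributing the reduced word of `g_{i-1} a^n g_j⁻¹`, where `n` is the
sum of the `s_m` over the `u_m` in the run, and these pieces concatenate to a reduced word. So the
product determines the runs up to the choice of `u_m` or `v_m` at each position, subject to equal
sums. Two different factorizations thus give two different sets of `u`-positions with the same
sum; since all `s_i > 0`, their differences are disjoint, nonempty, and have equal sums.
Conversely, if `U₁, U₂` are a solution, the words `x_1 ⋯ x_k` with `x_i = u_i` for `i ∈ U` and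
`x_i = v_i` otherwise, for `U = U₁` and `U = U₂`, have equal products.
-/

/-- The free group on the `k+2` generators `g₀, …, g_k, a`. -/
abbrev Fgrp (k : ℕ) := FreeGroup (Fin (k + 1) ⊕ Unit)

/-- The generator `g_j`. -/
def gGen {k : ℕ} (j : Fin (k + 1)) : Fgrp k := FreeGroup.of (Sum.inl j)

/-- The generator `a`. -/
def aGen {k : ℕ} : Fgrp k := FreeGroup.of (Sum.inr ())

/-- The family of `2k` elements: `Sum.inl i` indexes `u_{i+1} = g_i · a^{s_{i+1}} · g_{i+1}⁻¹`
and `Sum.inr i` indexes `v_{i+1} = g_i · g_{i+1}⁻¹` (the index `i : Fin k` corresponds to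
the `1`-based index `i+1`, with `s : Fin k → ℕ` listing `s₁, …, s_k`). -/
def fam {k : ℕ} (s : Fin k → ℕ) : Fin k ⊕ Fin k → Fgrp k
  | Sum.inl i => gGen i.castSucc * aGen ^ (s i) * (gGen i.succ)⁻¹
  | Sum.inr i => gGen i.castSucc * (gGen i.succ)⁻¹

def HasEqualSubsetSums {α : Type*} (s : α → ℕ) : Prop :=
  ∃ U₁ U₂ : Finset α, U₁.Nonempty ∧ U₂.Nonempty ∧ Disjoint U₁ U₂ ∧
    ∑ i ∈ U₁, s i = ∑ i ∈ U₂, s i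

theorem hasEqualSubsetSums_of_ne {α : Type*} [DecidableEq α] {s : α → ℕ} (hs : ∀ i, 0 < s i)
    {U₁ U₂ : Finset α} (hne : U₁ ≠ U₂) (hsum : ∑ i ∈ U₁, s i = ∑ i ∈ U₂, s i) :
    HasEqualSubsetSums s := by
  have sum_sdiff : ∀ {V W : Finset α}, ∑ i ∈ V, s i = ∑ i ∈ W, s i →
      ∑ i ∈ V \ W, s i = ∑ i ∈ W \ V, s i := fun {V W} h => by
    have hV := Finset.sum_inter_add_sum_sdiff V W s
    have hW := Finset.sum_inter_add_sum_sdiff W V s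
    rw [Finset.inter_comm] at hW
    omega
  have nonempty_sdiff : ∀ {V W : Finset α}, V ≠ W → ∑ i ∈ V, s i = ∑ i ∈ W, s i →
      (V \ W).Nonempty := fun {V W} hne h => by
    by_contra hVW
    have hWV : W \ V = ∅ := by
      rw [Finset.not_nonempty_iff_eq_empty] at hVW
      have := sum_sdiff h
      rw [hVW, Finset.sum_empty, eq_comm, Finset.sum_eq_zero_iff] at this
      exact Finset.eq_empty_of_forall_notMem fun i hi => (hs i).ne' (this i hi)
    rw [Finset.not_nonempty_iff_eq_empty, Finset.sdiff_eq_empty_iff_subset] at hVW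
    exact hne (hVW.antisymm (Finset.sdiff_eq_empty_iff_subset.mp hWV))
  exact ⟨U₁ \ U₂, U₂ \ U₁, nonempty_sdiff hne hsum, nonempty_sdiff hne.symm hsum.symm,
    disjoint_sdiff_sdiff, sum_sdiff hsum⟩

namespace List

variable {α β : Type*}

theorem eq_of_append_cons_eq_append_cons {p : α → Bool} {u v l m : List α} {x y : α}
    (hu : ∀ a ∈ u, p a) (hv : ∀ a ∈ v, p a) (hx : ¬p x) (hy : ¬p y)
    (h : u ++ x :: l = v ++ y :: m) : u = v ∧ x :: l = y :: m := by
  have ht := congrArg (takeWhile p) h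
  have hd := congrArg (dropWhile p) h
  rw [takeWhile_append_of_pos hu, takeWhile_append_of_pos hv, takeWhile_cons_of_neg hx,
    takeWhile_cons_of_neg hy, append_nil, append_nil] at ht
  rw [dropWhile_append_of_pos hu, dropWhile_append_of_pos hv, dropWhile_cons_of_neg hx,
    dropWhile_cons_of_neg hy] at hd
  exact ⟨ht, hd⟩

theorem eq_of_flatten_eq {p : α → Bool} {L₁ L₂ : List (List α)}
    (hL₁ : ∀ w ∈ L₁, ∃ u y, w = u ++ [y] ∧ (∀ a ∈ u, p a) ∧ ¬p y)
    (hL₂ : ∀ w ∈ L₂, ∃ u y, w = u ++ [y] ∧ (∀ a ∈ u, p a) ∧ ¬p y)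
    (h : L₁.flatten = L₂.flatten) : L₁ = L₂ := by
  induction L₁ generalizing L₂ with
  | nil =>
    cases L₂ with
    | nil => rfl
    | cons w L₂ =>
      obtain ⟨u, y, rfl, -⟩ := hL₂ w mem_cons_self
      simp at h
  | cons w L₁ ih =>
    obtain ⟨u, x, rfl, hu, hx⟩ := hL₁ w mem_cons_self
    cases L₂ with
    | nil => simp at h
    | cons w' L₂ =>
      obtain ⟨v, y, rfl, hv, hy⟩ := hL₂ w' mem_cons_self
      simp only [flatten_cons, append_assoc, singleton_append] at h
      obtain ⟨rfl, hxy⟩ := eq_of_append_cons_eq_append_cons hu hv hx hy h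
      obtain ⟨rfl, hL⟩ := cons.inj hxy
      rw [ih (fun w hw => hL₁ w (mem_cons_of_mem _ hw))
        (fun w hw => hL₂ w (mem_cons_of_mem _ hw)) hL]

theorem eq_or_of_map_eq {f : α → β} {P : Prop} {L₁ L₂ : List α}
    (hf : ∀ a ∈ L₁, ∀ b ∈ L₂, f a = f b → a = b ∨ P) (h : L₁.map f = L₂.map f) :
    L₁ = L₂ ∨ P := by
  induction L₁ generalizing L₂ with
  | nil => exact .inl (map_eq_nil_iff.mp h.symm).symm
  | cons a L₁ ih =>
    cases L₂ with
    | nil => simp at h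
    | cons b L₂ =>
      rw [map_cons, map_cons, cons.injEq] at h
      rcases hf a mem_cons_self b mem_cons_self h.1 with rfl | hP
      · have hf_tail : ∀ a ∈ L₁, ∀ b ∈ L₂, f a = f b → a = b ∨ P := fun a ha b hb =>
          hf a (mem_cons_of_mem _ ha) b (mem_cons_of_mem _ hb)
        exact (ih hf_tail h.2).imp_left (congrArg (a :: ·))
      · exact .inr hP

theorem map_eq_range'_of_isChain {f : α → ℕ} {a : α} {l : List α}
    (h : (a :: l).IsChain (fun x y => f x + 1 = f y)) :
    (a :: l).map f = range' (f a) (l.length + 1) := by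
  induction l generalizing a with
  | nil => rfl
  | cons b l ih =>
    obtain ⟨hab, h⟩ := isChain_cons_cons.mp h
    rw [map_cons, ih h, length_cons, range'_succ (n := l.length + 1), hab]

end List

namespace FreeGroup

theorem mk_flatten {α : Type*} (L : List (List (α × Bool))) : mk L.flatten = (L.map mk).prod := by
  induction L with
  | nil => rfl
  | cons w L ih => rw [List.flatten_cons, ← mul_mk, ih, List.map_cons, List.prod_cons]

end FreeGroup

namespace SubsetSumCode

open FreeGroup

variable {k : ℕ}

def index : Fin k ⊕ Fin k → Fin k := Sum.elim id id

def weight (s : Fin k → ℕ) : Fin k ⊕ Fin k → ℕ := Sum.elim s 0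

def block (i j : Fin k) (n : ℕ) : Fgrp k := gGen i.castSucc * aGen ^ n * (gGen j.succ)⁻¹

theorem fam_eq_block (s : Fin k → ℕ) (x : Fin k ⊕ Fin k) :
    fam s x = block (index x) (index x) (weight s x) := by
  cases x <;> simp [fam, block, index, weight]

theorem block_mul_block {i j i' j' : Fin k} (h : j.succ = i'.castSucc) (m n : ℕ) :
    block i j m * block i' j' n = block i j' (m + n) := by
  simp only [block, h, pow_add]
  group

def blockWord (i j : Fin k) (n : ℕ) : List ((Fin (k + 1) ⊕ Unit) × Bool) :=
  (Sum.inl i.castSucc, true) :: List.replicate n (Sum.inr (), true) ++ [(Sum.inl j.succ, false)]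

theorem head?_blockWord (i j : Fin k) (n : ℕ) :
    (blockWord i j n).head? = some (Sum.inl i.castSucc, true) :=
  rfl

theorem getLast?_blockWord (i j : Fin k) (n : ℕ) :
    (blockWord i j n).getLast? = some (Sum.inl j.succ, false) :=
  List.getLast?_concat

theorem blockWord_inj {i j i' j' : Fin k} {m n : ℕ} (h : blockWord i j m = blockWord i' j' n) :
    i = i' ∧ j = j' ∧ m = n := by
  obtain ⟨hi, hn, hj⟩ : i = i' ∧ m = n ∧ j = j' := by simpa [blockWord] using h
  exact ⟨hi, hj, hn⟩

theorem mk_blockWord (i j : Fin k) (n : ℕ) : mk (blockWord i j n) = block i j n := by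
  have hpow : mk (List.replicate n (Sum.inr (), true)) = (aGen : Fgrp k) ^ n := by
    rw [← toWord_of_pow, mk_toWord]; rfl
  rw [blockWord, ← mul_mk, ← List.singleton_append, ← mul_mk, hpow, block, gGen, gGen, of, of,
    inv_mk]
  rfl

theorem isReduced_blockWord {i j : Fin k} (h : i ≤ j) (n : ℕ) : IsReduced (blockWord i j n) := by
  have hij : i.castSucc ≠ j.succ := by
    rw [Fin.le_def] at h
    simp only [ne_eq, Fin.ext_iff, Fin.val_castSucc, Fin.val_succ]
    omega
  cases n with
  | zero => simpa [blockWord, FreeGroup.IsReduced] using hij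
  | succ n =>
    simp only [blockWord, List.replicate_succ, List.cons_append, isReduced_cons_cons]
    refine ⟨by simp, ?_⟩
    rw [← List.cons_append, ← List.replicate_succ, FreeGroup.IsReduced, List.isChain_append]
    exact ⟨List.isChain_replicate_of_rel _ (by simp), List.isChain_singleton _,
      by simp [List.getLast?_replicate]⟩

def linked (x y : Fin k ⊕ Fin k) : Bool := (index x : ℕ) + 1 = index y

def IsRun (r : List (Fin k ⊕ Fin k)) : Prop := r.IsChain fun x y => linked x y

theorem map_index_of_isRun {x : Fin k ⊕ Fin k} {t : List (Fin k ⊕ Fin k)} (hr : IsRun (x :: t)) :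
    (x :: t).map (fun y => (index y : ℕ)) = List.range' (index x) (t.length + 1) :=
  List.map_eq_range'_of_isChain (by simpa [IsRun, linked] using hr)

theorem nodup_map_index_of_isRun {r : List (Fin k ⊕ Fin k)} (hr : IsRun r) :
    (r.map index).Nodup := by
  cases r with
  | nil => exact List.nodup_nil
  | cons x t =>
    refine List.Nodup.of_map Fin.val ?_
    rw [List.map_map]
    exact map_index_of_isRun hr ▸ List.nodup_range'

theorem val_index_getLast_of_isRun {x : Fin k ⊕ Fin k} {t : List (Fin k ⊕ Fin k)}
    (hr : IsRun (x :: t)) :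
    (index ((x :: t).getLast (List.cons_ne_nil x t)) : ℕ) = index x + t.length := by
  rw [← List.getLast_map (f := fun y => (index y : ℕ)) (by simp)]
  simp only [map_index_of_isRun hr, List.getLast_range']
  omega

def runWord (s : Fin k → ℕ) : List (Fin k ⊕ Fin k) → List ((Fin (k + 1) ⊕ Unit) × Bool)
  | [] => []
  | x :: t =>
    blockWord (index x) (index ((x :: t).getLast (List.cons_ne_nil x t)))
      ((x :: t).map (weight s)).sum

theorem runWord_congr (s : Fin k → ℕ) {r₁ r₂ : List (Fin k ⊕ Fin k)}
    (hidx : r₁.map index = r₂.map index)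
    (hwt : (r₁.map (weight s)).sum = (r₂.map (weight s)).sum) : runWord s r₁ = runWord s r₂ := by
  cases r₁ with
  | nil => rw [List.map_eq_nil_iff.mp hidx.symm]
  | cons x₁ t₁ =>
    cases r₂ with
    | nil => simp at hidx
    | cons x₂ t₂ =>
      have hlast := List.getLast_congr (by simp) (by simp) hidx
      simp only [List.getLast_map] at hlast
      rw [List.map_cons, List.map_cons, List.cons.injEq] at hidx
      rw [runWord, runWord, hidx.1, hlast, hwt]

theorem prod_map_fam_of_isRun (s : Fin k → ℕ) {x : Fin k ⊕ Fin k} {t : List (Fin k ⊕ Fin k)}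
    (hr : IsRun (x :: t)) :
    ((x :: t).map (fam s)).prod =
      block (index x) (index ((x :: t).getLast (List.cons_ne_nil x t)))
        ((x :: t).map (weight s)).sum := by
  induction t generalizing x with
  | nil => simp [fam_eq_block]
  | cons y t ih =>
    obtain ⟨hxy, hr⟩ := List.isChain_cons_cons.mp hr
    rw [List.map_cons, List.prod_cons, ih hr, fam_eq_block, block_mul_block]
    · simp [List.getLast_cons]
    · ext; simpa [linked] using hxy

theorem prod_map_fam_eq_mk_runWord (s : Fin k → ℕ) {r : List (Fin k ⊕ Fin k)} (hr : IsRun r) :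
    (r.map (fam s)).prod = mk (runWord s r) := by
  cases r with
  | nil => rfl
  | cons x t => rw [prod_map_fam_of_isRun s hr, ← mk_blockWord]; rfl

def word (s : Fin k → ℕ) (l : List (Fin k ⊕ Fin k)) : List ((Fin (k + 1) ⊕ Unit) × Bool) :=
  ((l.splitBy linked).map (runWord s)).flatten

theorem mk_word (s : Fin k → ℕ) (l : List (Fin k ⊕ Fin k)) :
    mk (word s l) = (l.map (fam s)).prod := by
  conv_rhs => rw [← List.flatten_splitBy linked l]
  rw [word, mk_flatten, List.map_flatten, List.prod_flatten, List.map_map, List.map_map]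
  congr 1
  refine List.map_congr_left fun r hr => ?_
  exact (prod_map_fam_eq_mk_runWord s (List.isChain_of_mem_splitBy hr)).symm

/- Inside a run the index does not decrease, so a block never cancels internally; consecutive
runs are not linked, so neighbouring blocks do not cancel either. -/
theorem isReduced_word (s : Fin k → ℕ) (l : List (Fin k ⊕ Fin k)) : IsReduced (word s l) := by
  rw [word, FreeGroup.IsReduced, List.isChain_flatten]
  · refine ⟨?_, ?_⟩
    · simp only [List.mem_map]
      rintro _ ⟨r, hr, rfl⟩
      obtain ⟨x, t, rfl⟩ := List.exists_cons_of_ne_nil (List.ne_nil_of_mem_splitBy hr)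
      refine isReduced_blockWord ?_ _
      rw [Fin.le_def, val_index_getLast_of_isRun (List.isChain_of_mem_splitBy hr)]
      omega
    · rw [List.isChain_map]
      refine (List.isChain_getLast_head_splitBy linked l).imp ?_
      rintro r₁ r₂ ⟨h₁, h₂, h⟩
      obtain ⟨x₁, t₁, rfl⟩ := List.exists_cons_of_ne_nil h₁
      obtain ⟨x₂, t₂, rfl⟩ := List.exists_cons_of_ne_nil h₂
      simp only [runWord, getLast?_blockWord, head?_blockWord, Option.mem_def, Option.some.injEq,
        forall_eq', Sum.inl.injEq, Fin.ext_iff, Fin.val_succ, Fin.val_castSucc]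
      simp only [linked, decide_eq_false_iff_not] at h
      exact fun h' => absurd h' h
  · simp only [List.mem_map, not_exists, not_and]
    intro r hr
    obtain ⟨x, t, rfl⟩ := List.exists_cons_of_ne_nil (List.ne_nil_of_mem_splitBy hr)
    simp [runWord, blockWord]

theorem toWord_prod_map_fam (s : Fin k → ℕ) (l : List (Fin k ⊕ Fin k)) :
    ((l.map (fam s)).prod).toWord = word s l := by
  rw [← mk_word, toWord_mk, (isReduced_word s l).reduce_eq]

def uIndices (r : List (Fin k ⊕ Fin k)) : Finset (Fin k) := (r.filterMap Sum.getLeft?).toFinset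

theorem mem_uIndices {i : Fin k} {r : List (Fin k ⊕ Fin k)} : i ∈ uIndices r ↔ Sum.inl i ∈ r := by
  simp [uIndices]

theorem sum_map_filterMap_getLeft? (s : Fin k → ℕ) (r : List (Fin k ⊕ Fin k)) :
    ((r.filterMap Sum.getLeft?).map s).sum = (r.map (weight s)).sum := by
  induction r with
  | nil => rfl
  | cons x r ih =>
    rw [List.map_cons, List.sum_cons, ← ih]
    cases x <;> simp [weight, List.filterMap_cons]

theorem sum_uIndices (s : Fin k → ℕ) {r : List (Fin k ⊕ Fin k)} (hr : (r.map index).Nodup) :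
    ∑ i ∈ uIndices r, s i = (r.map (weight s)).sum := by
  have hnodup : (r.filterMap Sum.getLeft?).Nodup :=
    (hr.of_map index).filterMap fun a a' b hb hb' => by
      simp only [Option.mem_def, Sum.getLeft?_eq_some_iff] at hb hb'
      rw [hb, hb']
  rw [uIndices, List.sum_toFinset _ hnodup, sum_map_filterMap_getLeft?]

def selectIndex (U : Finset (Fin k)) (i : Fin k) : Fin k ⊕ Fin k :=
  if i ∈ U then .inl i else .inr i

theorem index_selectIndex (U : Finset (Fin k)) (i : Fin k) : index (selectIndex U i) = i := by
  unfold selectIndex; split_ifs <;> rfl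

theorem selectIndex_eq_inl {U : Finset (Fin k)} {i j : Fin k} :
    selectIndex U j = .inl i ↔ j ∈ U ∧ j = i := by
  unfold selectIndex; split_ifs <;> simp [*]

theorem map_selectIndex_uIndices {r : List (Fin k ⊕ Fin k)} (hr : (r.map index).Nodup) :
    (r.map index).map (selectIndex (uIndices r)) = r := by
  rw [List.map_map]
  conv_rhs => rw [← List.map_id r]
  refine List.map_congr_left fun x hx => ?_
  cases x with
  | inl i => simp [selectIndex, index, mem_uIndices, hx]
  | inr i =>
    have : Sum.inl i ∉ r := fun h => Sum.inl_ne_inr (List.inj_on_of_nodup_map hr h hx rfl)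
    simp [selectIndex, index, mem_uIndices, this]

theorem eq_or_hasEqualSubsetSums_of_map_index_eq {s : Fin k → ℕ} (hs : ∀ i, 0 < s i)
    {r₁ r₂ : List (Fin k ⊕ Fin k)} (hr₁ : (r₁.map index).Nodup)
    (hidx : r₁.map index = r₂.map index) (hwt : (r₁.map (weight s)).sum = (r₂.map (weight s)).sum) :
    r₁ = r₂ ∨ HasEqualSubsetSums s := by
  have hr₂ : (r₂.map index).Nodup := hidx ▸ hr₁
  by_cases hU : uIndices r₁ = uIndices r₂
  · left
    rw [← map_selectIndex_uIndices hr₁, ← map_selectIndex_uIndices hr₂, hidx, hU]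
  · right
    exact hasEqualSubsetSums_of_ne hs hU (by rw [sum_uIndices s hr₁, sum_uIndices s hr₂, hwt])

theorem map_index_eq_of_isRun {x₁ x₂ : Fin k ⊕ Fin k} {t₁ t₂ : List (Fin k ⊕ Fin k)}
    (hr₁ : IsRun (x₁ :: t₁)) (hr₂ : IsRun (x₂ :: t₂)) (hx : index x₁ = index x₂)
    (hlast : index ((x₁ :: t₁).getLast (List.cons_ne_nil _ _)) =
      index ((x₂ :: t₂).getLast (List.cons_ne_nil _ _))) :
    (x₁ :: t₁).map index = (x₂ :: t₂).map index := by
  have hlen : t₁.length = t₂.length := by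
    have := congrArg Fin.val hlast
    rw [val_index_getLast_of_isRun hr₁, val_index_getLast_of_isRun hr₂, hx] at this
    omega
  refine List.map_injective_iff.mpr Fin.val_injective ?_
  simp only [List.map_map, Function.comp_def]
  rw [map_index_of_isRun hr₁, map_index_of_isRun hr₂, hx, hlen]

theorem eq_or_hasEqualSubsetSums_of_runWord_eq {s : Fin k → ℕ} (hs : ∀ i, 0 < s i)
    {r₁ r₂ : List (Fin k ⊕ Fin k)} (hr₁ : IsRun r₁) (hr₂ : IsRun r₂) (hne : r₁ ≠ [])
    (h : runWord s r₁ = runWord s r₂) : r₁ = r₂ ∨ HasEqualSubsetSums s := by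
  obtain ⟨x₁, t₁, rfl⟩ := List.exists_cons_of_ne_nil hne
  cases r₂ with
  | nil => simp [runWord, blockWord] at h
  | cons x₂ t₂ =>
    obtain ⟨hx, hlast, hwt⟩ := blockWord_inj h
    exact eq_or_hasEqualSubsetSums_of_map_index_eq hs (nodup_map_index_of_isRun hr₁)
      (map_index_eq_of_isRun hr₁ hr₂ hx hlast) hwt

theorem eq_or_hasEqualSubsetSums_of_word_eq {s : Fin k → ℕ} (hs : ∀ i, 0 < s i)
    {l₁ l₂ : List (Fin k ⊕ Fin k)} (h : word s l₁ = word s l₂) :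
    l₁ = l₂ ∨ HasEqualSubsetSums s := by
  have hshape : ∀ l : List (Fin k ⊕ Fin k), ∀ w ∈ (l.splitBy linked).map (runWord s),
      ∃ u y, w = u ++ [y] ∧ (∀ a ∈ u, a.2) ∧ ¬y.2 := by
    simp only [List.mem_map]
    rintro l _ ⟨r, hr, rfl⟩
    obtain ⟨x, t, rfl⟩ := List.exists_cons_of_ne_nil (List.ne_nil_of_mem_splitBy hr)
    exact ⟨_, _, rfl, by simp, by simp⟩
  have hruns := List.eq_of_flatten_eq (hshape l₁) (hshape l₂) h
  refine (List.eq_or_of_map_eq (fun r₁ h₁ r₂ h₂ => eq_or_hasEqualSubsetSums_of_runWord_eq hs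
    (List.isChain_of_mem_splitBy h₁) (List.isChain_of_mem_splitBy h₂)
    (List.ne_nil_of_mem_splitBy h₁)) hruns).imp_left fun hR => ?_
  rw [← List.flatten_splitBy linked l₁, hR, List.flatten_splitBy]

def selectList (U : Finset (Fin k)) : List (Fin k ⊕ Fin k) := (List.finRange k).map (selectIndex U)

theorem map_index_selectList (U : Finset (Fin k)) :
    (selectList U).map index = List.finRange k := by
  simp [selectList, Function.comp_def, index_selectIndex]

theorem isRun_selectList (U : Finset (Fin k)) : IsRun (selectList U) := by
  rw [IsRun, selectList, List.isChain_map, List.isChain_iff_getElem]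
  intro i hi
  simp [linked, index_selectIndex]

theorem uIndices_selectList (U : Finset (Fin k)) : uIndices (selectList U) = U := by
  ext i
  simp [mem_uIndices, selectList, selectIndex_eq_inl]

theorem selectList_ne_nil {U : Finset (Fin k)} (hU : U.Nonempty) : selectList U ≠ [] := by
  obtain ⟨i, -⟩ := hU
  rw [selectList, Ne, List.map_eq_nil_iff, List.finRange_eq_nil_iff]
  exact (Fin.pos i).ne'

theorem prod_selectList_eq (s : Fin k → ℕ) {U₁ U₂ : Finset (Fin k)}
    (hsum : ∑ i ∈ U₁, s i = ∑ i ∈ U₂, s i) :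
    ((selectList U₁).map (fam s)).prod = ((selectList U₂).map (fam s)).prod := by
  have hnodup : ∀ U, ((selectList U).map index).Nodup := fun U =>
    map_index_selectList U ▸ List.nodup_finRange k
  rw [prod_map_fam_eq_mk_runWord s (isRun_selectList U₁),
    prod_map_fam_eq_mk_runWord s (isRun_selectList U₂), runWord_congr s]
  · rw [map_index_selectList, map_index_selectList]
  · rw [← sum_uIndices s (hnodup U₁), ← sum_uIndices s (hnodup U₂), uIndices_selectList,
      uIndices_selectList, hsum]

end SubsetSumCode

open SubsetSumCode

theorem not_code_iff_equal_subset_sum_general (k : ℕ) (s : Fin k → ℕ)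
    (hs : ∀ i, 0 < s i) :
    (∃ l₁ l₂ : List (Fin k ⊕ Fin k), l₁ ≠ [] ∧ l₂ ≠ [] ∧ l₁ ≠ l₂ ∧
        (l₁.map (fam s)).prod = (l₂.map (fam s)).prod) ↔
      (∃ U₁ U₂ : Finset (Fin k), U₁.Nonempty ∧ U₂.Nonempty ∧ Disjoint U₁ U₂ ∧
        ∑ i ∈ U₁, s i = ∑ i ∈ U₂, s i) := by
  constructor
  · rintro ⟨l₁, l₂, -, -, hne, hprod⟩
    have hword : word s l₁ = word s l₂ := by
      rw [← toWord_prod_map_fam, hprod, toWord_prod_map_fam]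
    exact (eq_or_hasEqualSubsetSums_of_word_eq hs hword).resolve_left hne
  · rintro ⟨U₁, U₂, hU₁, hU₂, hdisj, hsum⟩
    refine ⟨selectList U₁, selectList U₂, selectList_ne_nil hU₁, selectList_ne_nil hU₂,
      fun h => ?_, prod_selectList_eq s hsum⟩
    obtain ⟨i, hi⟩ := hU₁
    have hU : U₁ = U₂ := by rw [← uIndices_selectList U₁, h, uIndices_selectList]
    exact Finset.disjoint_left.mp hdisj hi (hU ▸ hi)

/-- The family `(u_i, v_i)_{1 ≤ i ≤ k}` fails to be a code iff the equal subset sum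
instance `s₁, …, s_k` has a solution: two disjoint nonempty subsets of `{1,…,k}` with
equal sums. -/
theorem not_code_iff_equal_subset_sum (k : ℕ) (hk : 1 ≤ k) (s : Fin k → ℕ)
    (hs : ∀ i, 0 < s i) :
    (∃ l₁ l₂ : List (Fin k ⊕ Fin k), l₁ ≠ [] ∧ l₂ ≠ [] ∧ l₁ ≠ l₂ ∧
        (l₁.map (fam s)).prod = (l₂.map (fam s)).prod) ↔
      (∃ U₁ U₂ : Finset (Fin k), U₁.Nonempty ∧ U₂.Nonempty ∧ Disjoint U₁ U₂ ∧
        ∑ i ∈ U₁, s i = ∑ i ∈ U₂, s i) :=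
  not_code_iff_equal_subset_sum_general k s hs
end
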